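/- Let s be a nonempty finite sequence over {I, O} with I acting as x ↦ (3x+1)/2 on odds and O as x ↦ x/2 on evens, and let s' be the corresponding sequence with I replaced by I'(x) = 3x/2. Suppose P is a positive integer such that for every j with 0 ≤ j ≤ |s| - 1, the result of applying the first j maps of s' to P is an even integer. Then for every positive integer x such that s is a valid Collatz transformation sequence for x (each step's parity condition holds), s is also a valid transformation sequence for x + P, and for all 1 ≤ k ≤ |s|, applying the first k maps of s to x + P equals (first k maps of s applied to x) + (first k maps of s' applied to P). -/

import Mathlib

/-- A Collatz step symbol: `I` stands for x ↦ (3x+1)/2 (odd case), `O` for x ↦ x/2 (even case). -/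
inductive CStep where
  | I : CStep
  | O : CStep
deriving DecidableEq

/-- Integer action of a step. -/
def stepFn : CStep → ℤ → ℤ
  | .I, x => (3 * x + 1) / 2
  | .O, x => x / 2

/-- Apply a sequence of steps left to right to an integer. -/
def runSteps (s : List CStep) (x : ℤ) : ℤ := s.foldl (fun y t => stepFn t y) x

/-- Rational action of the primed steps: I'(x) = 3x/2, O(x) = x/2. -/
def stepFn' : CStep → ℚ → ℚ
  | .I, x => 3 * x / 2
  | .O, x => x / 2

/-- Apply the primed sequence left to right to a rational. -/
def runSteps' (s : List CStep) (x : ℚ) : ℚ := s.foldl (fun y t => stepFn' t y) x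

/-- Count of `I` symbols. -/
def cntI : List CStep → ℕ
  | [] => 0
  | .I :: t => cntI t + 1
  | .O :: t => cntI t

/-- Count of `O` symbols. -/
def cntO : List CStep → ℕ
  | [] => 0
  | .I :: t => cntO t
  | .O :: t => cntO t + 1

/-- `s` is a valid Collatz transformation sequence for `x`: at each step the current
value is odd exactly when the next symbol is `I` (hence even exactly when it is `O`). -/
def ValidSeq (s : List CStep) (x : ℤ) : Prop :=
  ∀ i (h : i < s.length), (s.get ⟨i, h⟩ = CStep.I ↔ Odd (runSteps (s.take i) x))

/-- `s` is the reduced Collatz dynamics of `x`: a valid sequence whose final value is `< x`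
while every proper nonempty prefix yields a value `≥ x`. -/
def IsReducedDyn (s : List CStep) (x : ℤ) : Prop :=
  ValidSeq s x ∧ runSteps s x < x ∧
    ∀ i, 1 ≤ i → i < s.length → x ≤ runSteps (s.take i) x

lemma runSteps_take_succ (s : List CStep) (x : ℤ) (k : ℕ) (h : k < s.length) :
    runSteps (s.take (k+1)) x = stepFn (s.get ⟨k, h⟩) (runSteps (s.take k) x) := by
  rw [runSteps, List.take_succ, List.getElem?_eq_getElem h, List.foldl_append]
  rfl

lemma runSteps'_take_succ (s : List CStep) (x : ℚ) (k : ℕ) (h : k < s.length) :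
    runSteps' (s.take (k+1)) x = stepFn' (s.get ⟨k, h⟩) (runSteps' (s.take k) x) := by
  rw [runSteps', List.take_succ, List.getElem?_eq_getElem h, List.foldl_append]
  rfl

theorem stmt4 (s : List CStep) (hs : s ≠ []) (P : ℤ) (hP : 0 < P)
    (hPeven : ∀ j, j < s.length → ∃ m : ℤ, runSteps' (s.take j) (P : ℚ) = 2 * m) :
    ∀ x : ℤ, 0 < x → ValidSeq s x →
      ValidSeq s (x + P) ∧
      ∀ k, 1 ≤ k → k ≤ s.length →
        (runSteps (s.take k) (x + P) : ℚ) =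
          (runSteps (s.take k) x : ℚ) + runSteps' (s.take k) (P : ℚ) := by
  intro x hx hval
  have key : ∀ k, k ≤ s.length → ∃ q : ℤ, runSteps' (s.take k) (P : ℚ) = (q : ℚ) ∧
      runSteps (s.take k) (x + P) = runSteps (s.take k) x + q := by
    intro k
    induction k with
    | zero => intro _; exact ⟨P, by simp [runSteps'], by simp [runSteps]⟩
    | succ k ih =>
      intro hk
      have hk' : k < s.length := hk
      obtain ⟨q, hq1, hq2⟩ := ih hk'.le
      obtain ⟨m, hm⟩ := hPeven k hk'
      have hqm : q = 2 * m := by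
        have : (q : ℚ) = 2 * (m : ℚ) := by rw [← hq1, hm]
        exact_mod_cast this
      rw [runSteps_take_succ s x k hk', runSteps_take_succ s (x+P) k hk',
        runSteps'_take_succ s (P : ℚ) k hk']
      rcases hget : s.get ⟨k, hk'⟩ with _ | _
      · have hodd : Odd (runSteps (s.take k) x) := (hval k hk').mp hget
        obtain ⟨n, hn⟩ := hodd
        refine ⟨3 * m, ?_, ?_⟩
        · rw [hm]; simp only [stepFn']; push_cast; ring
        · simp only [stepFn]
          rw [hq2, hqm, hn]
          have e1 : (3 * (2 * n + 1) + 1) / 2 = 3 * n + 2 := by omega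
          have e2 : (3 * ((2 * n + 1) + 2 * m) + 1) / 2 = 3 * n + 2 + 3 * m := by omega
          rw [e2, e1]
      · have hne : s.get ⟨k, hk'⟩ ≠ CStep.I := by rw [hget]; intro h; cases h
        have heven : ¬ Odd (runSteps (s.take k) x) := fun h => hne ((hval k hk').mpr h)
        obtain ⟨n, hn⟩ := Int.not_odd_iff_even.mp heven
        refine ⟨m, ?_, ?_⟩
        · rw [hm]; simp only [stepFn']; push_cast; ring
        · simp only [stepFn]
          rw [hq2, hqm, hn]
          have e1 : (n + n) / 2 = n := by omega
          have e2 : ((n + n) + 2 * m) / 2 = n + m := by omega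
          rw [e2, e1]
      -- end cases
  constructor
  · intro i hi
    obtain ⟨q, hq1, hq2⟩ := key i hi.le
    obtain ⟨m, hm⟩ := hPeven i hi
    have hqm : q = 2 * m := by
      have : (q : ℚ) = 2 * (m : ℚ) := by rw [← hq1, hm]
      exact_mod_cast this
    rw [hq2, hqm, hval i hi, Int.odd_iff, Int.odd_iff]
    omega
  · intro k hk1 hk2
    obtain ⟨q, hq1, hq2⟩ := key k hk2
    rw [hq2, hq1]
    push_cast
    ring
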